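/- With χ' as in the cell problem (χ'(r) = -(2/σ²)(∫_{-∞}^r g̃ p_R)/p_R(r)), the quantity A₂ = ∫ χ(r) g̃(r) p_R(r) dr equals (σ²/2)∫ (χ'(r))² p_R(r) dr = (2/σ²) ∫_ℝ (∫_{-∞}^r g̃(s)p_R(s)ds)² / p_R(r) dr, and in particular A₂ ≥ 0. -/

import Mathlib

open MeasureTheory Filter

/-!
Integrating by parts against `H' = g̃ p`, with the boundary term `χ H` vanishing at `±∞`, turns
`∫ χ g̃ p` into `-∫ χ' H`. The cell problem `χ' = -(2/σ²) H / p` makes both `-χ' H` and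
`(σ²/2) (χ')² p` equal to `(2/σ²) H² / p`, which is nonnegative because `p > 0`.
-/

theorem integral_mul_deriv_eq_neg_integral_deriv_mul_of_tendsto_zero
    {A : Type*} [NormedRing A] [NormedAlgebra ℝ A] [CompleteSpace A] {u v u' v' : ℝ → A}
    (hu : ∀ x, HasDerivAt u (u' x) x) (hv : ∀ x, HasDerivAt v (v' x) x)
    (huv' : Integrable (u * v')) (hu'v : Integrable (u' * v))
    (h_bot : Tendsto (u * v) atBot (nhds 0)) (h_top : Tendsto (u * v) atTop (nhds 0)) :
    ∫ x, u x * v' x = -∫ x, u' x * v x := by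
  simpa using integral_mul_deriv_eq_deriv_mul (fun x _ => hu x) (fun x _ => hv x) huv' hu'v
    h_bot h_top

section CellProblem

variable {c : ℝ} {p H χ' : ℝ → ℝ}

theorem integral_mul_eq_neg_mul_integral_sq_div (hχ' : ∀ r, χ' r = -c * H r / p r) :
    ∫ r, χ' r * H r = -c * ∫ r, H r ^ 2 / p r := by
  rw [← integral_const_mul]
  congr with r
  rw [hχ' r]
  ring

theorem integral_sq_mul_eq_sq_mul_integral_sq_div (hχ' : ∀ r, χ' r = -c * H r / p r) :
    ∫ r, χ' r ^ 2 * p r = c ^ 2 * ∫ r, H r ^ 2 / p r := by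
  rw [← integral_const_mul]
  congr with r
  have h_inv : (p r)⁻¹ * (p r)⁻¹ * p r = (p r)⁻¹ := by simpa using mul_self_mul_inv (p r)⁻¹
  calc χ' r ^ 2 * p r = c ^ 2 * H r ^ 2 * ((p r)⁻¹ * (p r)⁻¹ * p r) := by rw [hχ' r]; ring
    _ = c ^ 2 * (H r ^ 2 / p r) := by rw [h_inv]; ring

end CellProblem

theorem effective_diffusivity_enhancement_general
    (σ2 : ℝ) (hσ : 0 < σ2)
    (gtil p χ H : ℝ → ℝ) (hp : ∀ r, 0 < p r)
    (hHd : ∀ r, HasDerivAt H (gtil r * p r) r)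
    (hχd : ∀ r, DifferentiableAt ℝ χ r)
    (hchi : ∀ r, deriv χ r = -(2 / σ2) * H r / p r)
    (hdecayT : Tendsto (fun r => χ r * H r) atTop (nhds 0))
    (hdecayB : Tendsto (fun r => χ r * H r) atBot (nhds 0))
    (hint1 : Integrable (fun r => χ r * gtil r * p r))
    (hint2 : Integrable (fun r => deriv χ r * H r)) :
    (∫ r : ℝ, χ r * gtil r * p r) = (σ2 / 2) * ∫ r : ℝ, (deriv χ r) ^ 2 * p r ∧
      (σ2 / 2) * (∫ r : ℝ, (deriv χ r) ^ 2 * p r)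
        = (2 / σ2) * ∫ r : ℝ, (H r) ^ 2 / p r ∧
      0 ≤ ∫ r : ℝ, χ r * gtil r * p r := by
  have h_parts : ∫ r, χ r * gtil r * p r = -∫ r, deriv χ r * H r := by
    simp_rw [mul_assoc]
    exact integral_mul_deriv_eq_neg_integral_deriv_mul_of_tendsto_zero
      (fun r => (hχd r).hasDerivAt) hHd (by simpa only [Pi.mul_def, mul_assoc] using hint1)
      hint2 hdecayB hdecayT
  have hA : ∫ r, χ r * gtil r * p r = (2 / σ2) * ∫ r, H r ^ 2 / p r := by
    rw [h_parts, integral_mul_eq_neg_mul_integral_sq_div hchi]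
    ring
  have hB : (σ2 / 2) * ∫ r, deriv χ r ^ 2 * p r = (2 / σ2) * ∫ r, H r ^ 2 / p r := by
    rw [integral_sq_mul_eq_sq_mul_integral_sq_div hchi]
    field_simp
  have h_nonneg : 0 ≤ ∫ r, H r ^ 2 / p r :=
    integral_nonneg fun r => div_nonneg (sq_nonneg _) (hp r).le
  refine ⟨hA.trans hB.symm, hB, ?_⟩
  rw [hA]
  positivity

/-- The effective-diffusivity enhancement term: with `χ'(r) = -(2/σ²)H(r)/p(r)`
where `H(r) = ∫_{-∞}^r g̃ p`, one has
`A₂ = ∫ χ g̃ p = (σ²/2)∫ (χ')² p = (2/σ²)∫ H²/p ≥ 0`. -/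
theorem effective_diffusivity_enhancement
    (σ2 : ℝ) (hσ : 0 < σ2)
    (gtil p χ H : ℝ → ℝ) (hp : ∀ r, 0 < p r)
    (hH : ∀ r, H r = ∫ s in Set.Iic r, gtil s * p s)
    (hHd : ∀ r, HasDerivAt H (gtil r * p r) r)
    (hχd : ∀ r, DifferentiableAt ℝ χ r)
    (hchi : ∀ r, deriv χ r = -(2 / σ2) * H r / p r)
    (hdecayT : Tendsto (fun r => χ r * H r) atTop (nhds 0))
    (hdecayB : Tendsto (fun r => χ r * H r) atBot (nhds 0))
    (hint1 : Integrable (fun r => χ r * gtil r * p r))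
    (hint2 : Integrable (fun r => deriv χ r * H r)) :
    (∫ r : ℝ, χ r * gtil r * p r) = (σ2 / 2) * ∫ r : ℝ, (deriv χ r) ^ 2 * p r ∧
      (σ2 / 2) * (∫ r : ℝ, (deriv χ r) ^ 2 * p r)
        = (2 / σ2) * ∫ r : ℝ, (H r) ^ 2 / p r ∧
      0 ≤ ∫ r : ℝ, χ r * gtil r * p r :=
  effective_diffusivity_enhancement_general σ2 hσ gtil p χ H hp hHd hχd hchi hdecayT hdecayB hint1
    hint2
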